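/- arXiv:2312.10384 — 3 statements merged into one kernel-verified Lean document; each statement's English description precedes it below -/
import Mathlib

section
/- For every graph G, the Seidel matrix S(G) = J - I - 2A(G) has largest eigenvalue at most 3 if and only if the adjacency matrix of the cone over G has smallest eigenvalue at least -2. -/
open Matrix

/-- The Seidel matrix `S(G) = J - I - 2A(G)` of a graph `G`. -/
def seidel {V : Type*} [Fintype V] [DecidableEq V] (G : SimpleGraph V)
    [DecidableRel G.Adj] : Matrix V V ℝ :=
  Matrix.of (fun _ _ => (1 : ℝ)) - 1 - (2 : ℝ) • G.adjMatrix ℝ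

/-- The adjacency matrix of the cone over a graph whose adjacency matrix is `M`;
the added cone vertex (adjacent to all other vertices) is `none`. -/
def coneMatrix {n : ℕ} (M : Matrix (Fin n) (Fin n) ℝ) :
    Matrix (Option (Fin n)) (Option (Fin n)) ℝ :=
  Matrix.of fun i j =>
    match i, j with
    | some a, some b => M a b
    | some _, none => 1
    | none, some _ => 1
    | none, none => 0

/-! Writing a vector on the cone as `(y, t)`, with `t` the coordinate of the cone vertex,
`2 (y, t)ᵀ (A(cone G) + 2I) (y, t) = yᵀ (3I - S(G)) y + (∑ y + 2t)²`.
This gives one implication at once, and the other by taking `t = -(∑ y) / 2`. -/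

section Seidel

variable {V : Type*} [Fintype V] [DecidableEq V] (G : SimpleGraph V) [DecidableRel G.Adj]

theorem isHermitian_seidel : (seidel G).IsHermitian := by
  ext i j
  simp [seidel, Matrix.one_apply, SimpleGraph.adjMatrix_apply, G.adj_comm, eq_comm]

theorem dotProduct_seidel_mulVec (y : V → ℝ) :
    y ⬝ᵥ seidel G *ᵥ y = (∑ i, y i) ^ 2 - y ⬝ᵥ y - 2 * (y ⬝ᵥ G.adjMatrix ℝ *ᵥ y) := by
  have hJ : y ⬝ᵥ Matrix.of (fun _ _ => (1 : ℝ)) *ᵥ y = (∑ i, y i) ^ 2 := by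
    simp [dotProduct, mulVec, sq, Finset.sum_mul]
  simp only [seidel, sub_mulVec, smul_mulVec, one_mulVec, dotProduct_sub, dotProduct_smul, hJ,
    smul_eq_mul]

end Seidel

section Cone

variable {n : ℕ} {M : Matrix (Fin n) (Fin n) ℝ}

theorem Matrix.IsHermitian.coneMatrix (hM : M.IsHermitian) : (coneMatrix M).IsHermitian := by
  ext (_ | i) (_ | j) <;> simp [_root_.coneMatrix]
  simpa using congr_fun₂ hM i j

variable (M)

theorem dotProduct_coneMatrix_mulVec (x : Option (Fin n) → ℝ) :
    x ⬝ᵥ coneMatrix M *ᵥ x =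
      (x ∘ some) ⬝ᵥ M *ᵥ (x ∘ some) + 2 * x none * ∑ i, x (some i) := by
  simp only [dotProduct, mulVec, coneMatrix, Matrix.of_apply, Fintype.sum_option,
    Function.comp_apply, zero_mul, one_mul, mul_add, Finset.sum_add_distrib,
    ← Finset.sum_mul]
  ring

end Cone

theorem two_mul_dotProduct_cone_mulVec (n : ℕ) (G : SimpleGraph (Fin n)) [DecidableRel G.Adj]
    (x : Option (Fin n) → ℝ) :
    2 * (x ⬝ᵥ (coneMatrix (G.adjMatrix ℝ) + (2 : ℝ) • 1) *ᵥ x) =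
      (x ∘ some) ⬝ᵥ ((3 : ℝ) • 1 - seidel G) *ᵥ (x ∘ some) +
        (∑ i, x (some i) + 2 * x none) ^ 2 := by
  have hsq : x ⬝ᵥ x = (x ∘ some) ⬝ᵥ (x ∘ some) + x none ^ 2 := by
    simp [dotProduct, Fintype.sum_option, sq, add_comm]
  simp only [add_mulVec, sub_mulVec, smul_mulVec, one_mulVec, dotProduct_add, dotProduct_sub,
    dotProduct_smul, smul_eq_mul, dotProduct_coneMatrix_mulVec, dotProduct_seidel_mulVec, hsq,
    Function.comp_apply]
  ring

/-- For every graph `G`, the Seidel matrix `S(G)` has largest eigenvalue at most `3`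
(i.e. `3I - S(G)` is positive semidefinite) if and only if the adjacency matrix of the
cone over `G` has smallest eigenvalue at least `-2` (i.e. `A(cone G) + 2I` is positive
semidefinite). -/
theorem stmt0 (n : ℕ) (G : SimpleGraph (Fin n)) [DecidableRel G.Adj] :
    ((3 : ℝ) • (1 : Matrix (Fin n) (Fin n) ℝ) - seidel G).PosSemidef ↔
      (coneMatrix (G.adjMatrix ℝ) + (2 : ℝ) • 1).PosSemidef := by
  have hS : ((3 : ℝ) • (1 : Matrix (Fin n) (Fin n) ℝ) - seidel G).IsHermitian :=
    (isHermitian_one.smul (IsSelfAdjoint.all _)).sub (isHermitian_seidel G)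
  have hC : (coneMatrix (G.adjMatrix ℝ) + (2 : ℝ) • 1).IsHermitian :=
    (G.isHermitian_adjMatrix ℝ).coneMatrix.add (isHermitian_one.smul (IsSelfAdjoint.all _))
  simp only [posSemidef_iff_dotProduct_mulVec, hS, hC, true_and, star_trivial]
  constructor
  · intro h x
    linarith [h (x ∘ some), two_mul_dotProduct_cone_mulVec n G x,
      sq_nonneg (∑ i, x (some i) + 2 * x none)]
  · intro h y
    let x : Option (Fin n) → ℝ := fun o => o.elim (-(∑ i, y i) / 2) y
    have hx : ∑ i, x (some i) + 2 * x none = 0 := by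
      change ∑ i, y i + 2 * (-(∑ i, y i) / 2) = 0
      ring
    have hform := two_mul_dotProduct_cone_mulVec n G x
    rw [hx, show x ∘ some = y from rfl] at hform
    linarith [h x]
end

section
/- For every graph G, if the Seidel matrix S(G) has largest eigenvalue at most 3, then rank(3I - S(G)) + 1 = rank(A(cone(G)) + 2I). -/
open Matrix

section Aux

variable {k l m n : Type*} [Fintype k] [Fintype l] [Fintype m] [Fintype n]

/-- A product of submodules is linearly equivalent to the product of the submodules. -/
def submoduleProdEquiv {M N : Type*} [AddCommGroup M] [AddCommGroup N] [Module ℝ M]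
    [Module ℝ N] (p : Submodule ℝ M) (q : Submodule ℝ N) : (p.prod q) ≃ₗ[ℝ] p × q where
  toFun x := (⟨x.1.1, (Submodule.mem_prod.mp x.2).1⟩, ⟨x.1.2, (Submodule.mem_prod.mp x.2).2⟩)
  invFun x := ⟨(x.1.1, x.2.1), Submodule.mem_prod.mpr ⟨x.1.2, x.2.2⟩⟩
  map_add' := by intros; rfl
  map_smul' := by intros; rfl
  left_inv := by intro x; rfl
  right_inv := by intro x; rfl

lemma finrank_submodule_prod {M N : Type*} [AddCommGroup M] [AddCommGroup N] [Module ℝ M]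
    [Module ℝ N] [FiniteDimensional ℝ M] [FiniteDimensional ℝ N]
    (p : Submodule ℝ M) (q : Submodule ℝ N) :
    Module.finrank ℝ (p.prod q) = Module.finrank ℝ p + Module.finrank ℝ q := by
  rw [LinearEquiv.finrank_eq (submoduleProdEquiv p q), Module.finrank_prod]

lemma range_prodMap' {M N M₂ N₂ : Type*} [AddCommGroup M] [AddCommGroup N] [AddCommGroup M₂]
    [AddCommGroup N₂] [Module ℝ M] [Module ℝ N] [Module ℝ M₂] [Module ℝ N₂]
    (f : M →ₗ[ℝ] M₂) (g : N →ₗ[ℝ] N₂) :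
    LinearMap.range (f.prodMap g) = (LinearMap.range f).prod (LinearMap.range g) := by
  ext ⟨a, b⟩
  simp only [LinearMap.mem_range, Submodule.mem_prod, LinearMap.prodMap_apply, Prod.ext_iff,
    Prod.exists]
  constructor
  · rintro ⟨x, y, hx, hy⟩; exact ⟨⟨x, hx⟩, ⟨y, hy⟩⟩
  · rintro ⟨⟨x, hx⟩, ⟨y, hy⟩⟩; exact ⟨x, y, hx, hy⟩

lemma rank_fromBlocks_zero₁₂_zero₂₁ (A : Matrix k l ℝ) (D : Matrix m n ℝ) :
    (fromBlocks A 0 0 D).rank = A.rank + D.rank := by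
  have key : (fromBlocks A 0 0 D).mulVecLin =
      ((LinearEquiv.sumArrowLequivProdArrow k m ℝ ℝ).symm.toLinearMap).comp
        ((A.mulVecLin.prodMap D.mulVecLin).comp
          (LinearEquiv.sumArrowLequivProdArrow l n ℝ ℝ).toLinearMap) := by
    apply LinearMap.ext; intro x
    funext i
    cases i <;>
      simp [Matrix.mulVecLin_apply, fromBlocks_mulVec, LinearEquiv.sumArrowLequivProdArrow,
        Equiv.sumArrowEquivProdArrow]
  rw [Matrix.rank, key, LinearMap.range_comp, LinearEquiv.finrank_map_eq, LinearMap.range_comp,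
    LinearEquiv.range, Submodule.map_top, range_prodMap', finrank_submodule_prod]
  rfl

end Aux

/-- If the Seidel matrix `S(G)` has largest eigenvalue at most `3`, then
`rank(3I - S(G)) + 1 = rank(A(cone G) + 2I)`. -/
theorem stmt1 (n : ℕ) (G : SimpleGraph (Fin n)) [DecidableRel G.Adj]
    (h : ((3 : ℝ) • (1 : Matrix (Fin n) (Fin n) ℝ) - seidel G).PosSemidef) :
    ((3 : ℝ) • (1 : Matrix (Fin n) (Fin n) ℝ) - seidel G).rank + 1 =
      (coneMatrix (G.adjMatrix ℝ) + (2 : ℝ) • 1).rank := by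
  classical
  set A := G.adjMatrix ℝ with hA
  set M11 : Matrix (Fin n) (Fin n) ℝ := A + (2 : ℝ) • 1 with hM11
  set Bc : Matrix (Fin n) Unit ℝ := Matrix.of fun _ _ => (1 : ℝ) with hBc
  set Cr : Matrix Unit (Fin n) ℝ := Matrix.of fun _ _ => (1 : ℝ) with hCr
  set D : Matrix Unit Unit ℝ := (2 : ℝ) • 1 with hD
  have hDinv : Invertible D := by
    refine ⟨(2⁻¹ : ℝ) • 1, ?_, ?_⟩ <;>
      · rw [hD, Matrix.smul_mul, Matrix.mul_smul, smul_smul, Matrix.one_mul]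
        norm_num
  -- Step 1: reindex the cone matrix into block form
  have h1 : (coneMatrix A + (2 : ℝ) • 1).rank = (fromBlocks M11 Bc Cr D).rank := by
    have heq : coneMatrix A + (2 : ℝ) • 1 =
        (fromBlocks M11 Bc Cr D).submatrix (Equiv.optionEquivSumPUnit (Fin n))
          (Equiv.optionEquivSumPUnit (Fin n)) := by
      ext i j
      cases i <;> cases j <;>
        simp [coneMatrix, fromBlocks, Matrix.one_apply, hM11, hBc, hCr, hD,
          Matrix.add_apply, Matrix.smul_apply]
    rw [heq, Matrix.rank_submatrix]
  -- Step 2: Schur complement factorization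
  set S : Matrix (Fin n) (Fin n) ℝ := M11 - Bc * ⅟D * Cr with hS
  have h2 : (fromBlocks M11 Bc Cr D).rank = S.rank + 1 := by
    rw [fromBlocks_eq_of_invertible₂₂ M11 Bc Cr D]
    rw [Matrix.mul_assoc]
    rw [Matrix.rank_mul_eq_right_of_isUnit_det _ _ (by
      rw [det_fromBlocks_zero₂₁]; simp)]
    rw [Matrix.rank_mul_eq_left_of_isUnit_det _ _ (by
      rw [det_fromBlocks_zero₁₂]; simp)]
    rw [rank_fromBlocks_zero₁₂_zero₂₁]
    congr 1
    rw [Matrix.rank_of_isUnit D (isUnit_of_invertible D)]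
    simp
  -- Step 3: the left-hand matrix is twice the Schur complement
  have h3 : ((3 : ℝ) • (1 : Matrix (Fin n) (Fin n) ℝ) - seidel G) = ((2 : ℝ) • 1) * S := by
    have hinv : (⅟D : Matrix Unit Unit ℝ) = (2⁻¹ : ℝ) • 1 := by
      letI := hDinv
      exact invOf_eq_right_inv (by
        rw [hD, Matrix.smul_mul, Matrix.mul_smul, smul_smul, Matrix.one_mul]; norm_num)
    rw [Matrix.smul_mul, Matrix.one_mul, hS, hinv]
    ext i j
    simp [seidel, hM11, hBc, hCr, Matrix.mul_apply, Matrix.one_apply, Matrix.smul_apply,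
      Matrix.sub_apply, Matrix.add_apply, mul_ite]
    all_goals rw [hA]
    all_goals simp only [SimpleGraph.adjMatrix_apply]
    all_goals split_ifs <;> ring
  have h4 : ((3 : ℝ) • (1 : Matrix (Fin n) (Fin n) ℝ) - seidel G).rank = S.rank := by
    rw [h3, Matrix.rank_mul_eq_right_of_isUnit_det]
    rw [Matrix.det_smul, Matrix.det_one]
    simp only [mul_one]
    exact (isUnit_iff_ne_zero.mpr (by positivity))
  rw [h1, h2, h4]
end

section
/- Let G be a graph on vertex set {1,...,n} and suppose u_1,...,u_n, r are vectors whose Gram matrix equals A(cone(G)) + 2I, with r corresponding to the cone vertex. For U ⊆ {1,...,n}, define v_i = u_i if i ∈ U and v_i = r - u_i otherwise. Then the Gram matrix of v_1,...,v_n equals A(G^U) + 2I, where G^U is the switching of G with respect to U. -/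
open Matrix

/-- The switching `G^U` of a graph `G` with respect to a vertex subset `U`:
adjacency is preserved within `U` and within its complement, and complemented
between `U` and its complement. -/
def switchGraph {V : Type*} (G : SimpleGraph V) (U : Finset V) : SimpleGraph V where
  Adj x y := x ≠ y ∧
    (((x ∈ U ↔ y ∈ U) ∧ G.Adj x y) ∨ ((¬ (x ∈ U ↔ y ∈ U)) ∧ ¬ G.Adj x y))
  symm := ⟨by
    rintro x y ⟨hne, h | h⟩
    · exact ⟨hne.symm, Or.inl ⟨h.1.symm, h.2.symm⟩⟩
    · exact ⟨hne.symm, Or.inr ⟨fun hc => h.1 hc.symm, fun hc => h.2 hc.symm⟩⟩⟩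
  loopless := ⟨fun x h => h.1 rfl⟩

instance {V : Type*} [DecidableEq V] (G : SimpleGraph V) [DecidableRel G.Adj]
    (U : Finset V) : DecidableRel (switchGraph G U).Adj := fun x y =>
  inferInstanceAs (Decidable (x ≠ y ∧
    (((x ∈ U ↔ y ∈ U) ∧ G.Adj x y) ∨ ((¬ (x ∈ U ↔ y ∈ U)) ∧ ¬ G.Adj x y))))

/-! Replacing `u` by `r - u` on the vertices outside `U` keeps the inner products within each
side of the cut and turns `u_i ⬝ u_j` into `1 - u_i ⬝ u_j` across it, because `r` has inner
product `1` with every `u_i` and `2` with itself. Across the cut `i ≠ j`, so this is exactly the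
passage from the adjacency matrix of `G` to that of its switching. -/

section Switching

variable {m R : Type*} [Fintype m] [CommRing R]

theorem dotProduct_ite_sub_ite_sub {p q : Prop} [Decidable p] [Decidable q] {x y r : m → R}
    (hxr : x ⬝ᵥ r = 1) (hry : r ⬝ᵥ y = 1) (hrr : r ⬝ᵥ r = 2) :
    (if p then x else r - x) ⬝ᵥ (if q then y else r - y) =
      if (p ↔ q) then x ⬝ᵥ y else 1 - x ⬝ᵥ y := by
  by_cases hp : p <;> by_cases hq : q <;>
    simp [hp, hq, dotProduct_sub, sub_dotProduct, hxr, hry, hrr, ← one_add_one_eq_two]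

variable {V : Type*} [DecidableEq V]

theorem switchGraph_adjMatrix_apply (G : SimpleGraph V) [DecidableRel G.Adj] (U : Finset V)
    (i j : V) :
    (switchGraph G U).adjMatrix R i j =
      if (i ∈ U ↔ j ∈ U) then G.adjMatrix R i j else 1 - G.adjMatrix R i j := by
  by_cases hij : i = j
  · subst hij
    simp
  have hadj : (switchGraph G U).Adj i j ↔ ((i ∈ U ↔ j ∈ U) ↔ G.Adj i j) := by
    simp only [switchGraph, ne_eq, hij, not_false_eq_true, true_and]
    tauto
  simp only [SimpleGraph.adjMatrix_apply, hadj]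
  split_ifs <;> simp_all

end Switching

/-- Let `G` be a graph on `{1,…,n}` and `u_1,…,u_n, r` vectors whose Gram matrix is
`A(cone G) + 2I`, with `r` the cone vertex. For `U ⊆ {1,…,n}`, set `v_i = u_i` for
`i ∈ U` and `v_i = r - u_i` otherwise. Then the Gram matrix of `v_1,…,v_n` is
`A(G^U) + 2I`. -/
theorem stmt17 (d n : ℕ) (G : SimpleGraph (Fin n)) [DecidableRel G.Adj]
    (u : Fin n → (Fin d → ℝ)) (r : Fin d → ℝ)
    (hgram : ∀ i j : Option (Fin n),
      (Option.elim i r u) ⬝ᵥ (Option.elim j r u) =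
        (coneMatrix (G.adjMatrix ℝ) + (2 : ℝ) • 1) i j)
    (U : Finset (Fin n)) (v : Fin n → (Fin d → ℝ))
    (hv : ∀ i, v i = if i ∈ U then u i else r - u i) :
    ∀ i j : Fin n, v i ⬝ᵥ v j =
      ((switchGraph G U).adjMatrix ℝ + (2 : ℝ) • 1) i j := by
  intro i j
  have huu : u i ⬝ᵥ u j = G.adjMatrix ℝ i j + 2 * (1 : Matrix (Fin n) (Fin n) ℝ) i j := by
    simpa [coneMatrix, one_apply] using hgram (some i) (some j)
  have hur : u i ⬝ᵥ r = 1 := by simpa [coneMatrix] using hgram (some i) none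
  have hru : r ⬝ᵥ u j = 1 := by simpa [coneMatrix] using hgram none (some j)
  have hrr : r ⬝ᵥ r = 2 := by simpa [coneMatrix] using hgram none none
  rw [hv i, hv j, dotProduct_ite_sub_ite_sub hur hru hrr, Matrix.add_apply, Matrix.smul_apply,
    switchGraph_adjMatrix_apply, smul_eq_mul]
  by_cases hside : (i ∈ U ↔ j ∈ U)
  · rw [if_pos hside, if_pos hside, huu]
  · have hij : i ≠ j := fun h => hside (h ▸ Iff.rfl)
    rw [if_neg hside, if_neg hside, huu, one_apply_ne hij]
    ring
end
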